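/- arXiv:math/0506230 — 7 statements merged into one kernel-verified Lean document; each statement's English description precedes it below -/
import Mathlib

section
/- Let n ≥ 1. There exists a unique continuous function Φ̃ : Sym(n) → ℂ on the space of real symmetric n×n matrices such that Φ̃(0) = 0 and exp(Φ̃(A)) = det(I + iA) for every A ∈ Sym(n). -/
open Matrix Complex

section Aux
variable {n : ℕ}

lemma aux_herm {A : Matrix (Fin n) (Fin n) ℝ} (hA : A.IsSymm) :
    (A.map Complex.ofReal).IsHermitian := by
  ext i j
  simp only [Matrix.conjTranspose_apply, Matrix.map_apply, RCLike.star_def, Complex.conj_ofReal,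
    Complex.ofReal_inj]
  exact congrFun (congrFun hA i) j

lemma aux_diag {c : ℂ} {d : Fin n → ℝ} :
    (Matrix.diagonal (fun j => 1 + c * d j) : Matrix (Fin n) (Fin n) ℂ)
      = 1 + c • Matrix.diagonal (Complex.ofReal ∘ d) := by
  ext i j
  by_cases h : i = j <;>
    simp [Matrix.diagonal_apply, Matrix.one_apply, h]

lemma aux_conj {M : Matrix (Fin n) (Fin n) ℂ} (hM : M.IsHermitian) (c : ℂ) :
    1 + c • M = (hM.eigenvectorUnitary : Matrix (Fin n) (Fin n) ℂ) *
      Matrix.diagonal (fun j => 1 + c * hM.eigenvalues j) *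
      star (hM.eigenvectorUnitary : Matrix (Fin n) (Fin n) ℂ) := by
  set U := (hM.eigenvectorUnitary : Matrix (Fin n) (Fin n) ℂ) with hU
  have hUU : U * star U = 1 := Matrix.mem_unitaryGroup_iff.mp hM.eigenvectorUnitary.2
  have hst : M = U * Matrix.diagonal (Complex.ofReal ∘ hM.eigenvalues) * star U :=
    hM.spectral_theorem
  rw [aux_diag, mul_add, add_mul, mul_one, hUU, mul_smul_comm, smul_mul_assoc, ← hst]

lemma aux_det {M : Matrix (Fin n) (Fin n) ℂ} (hM : M.IsHermitian) (c : ℂ) :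
    (1 + c • M).det = ∏ j, (1 + c * hM.eigenvalues j) := by
  set U := (hM.eigenvectorUnitary : Matrix (Fin n) (Fin n) ℂ) with hU
  have hUU : U * star U = 1 := Matrix.mem_unitaryGroup_iff.mp hM.eigenvectorUnitary.2
  rw [aux_conj hM c]
  calc (U * Matrix.diagonal (fun j => 1 + c * hM.eigenvalues j) * star U).det
      = (U.det * (star U).det) * (Matrix.diagonal (fun j => 1 + c * hM.eigenvalues j)).det := by
        rw [Matrix.det_mul, Matrix.det_mul]; ring
    _ = ∏ j, (1 + c * hM.eigenvalues j) := by
        rw [← Matrix.det_mul, hUU, Matrix.det_one, one_mul, Matrix.det_diagonal]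

lemma aux_trace {M : Matrix (Fin n) (Fin n) ℂ} (hM : M.IsHermitian) (c : ℂ)
    (hne : ∀ j, (1 : ℂ) + c * hM.eigenvalues j ≠ 0) :
    Matrix.trace ((Complex.I • M) * (1 + c • M)⁻¹)
      = ∑ j, Complex.I * hM.eigenvalues j * (1 + c * hM.eigenvalues j)⁻¹ := by
  set U := (hM.eigenvectorUnitary : Matrix (Fin n) (Fin n) ℂ) with hU
  have hUU : U * star U = 1 := Matrix.mem_unitaryGroup_iff.mp hM.eigenvectorUnitary.2
  have hUU' : star U * U = 1 := Matrix.mem_unitaryGroup_iff'.mp hM.eigenvectorUnitary.2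
  have key : ∀ X Y : Matrix (Fin n) (Fin n) ℂ,
      (U * X * star U) * (U * Y * star U) = U * (X * Y) * star U := by
    intro X Y
    simp only [Matrix.mul_assoc]
    rw [← Matrix.mul_assoc (star U) U, hUU', Matrix.one_mul]
  have hinv : (1 + c • M)⁻¹
      = U * Matrix.diagonal (fun j => ((1 : ℂ) + c * hM.eigenvalues j)⁻¹) * star U := by
    apply Matrix.inv_eq_right_inv
    rw [aux_conj hM c, key, Matrix.diagonal_mul_diagonal]
    have : (fun j => (1 + c * ↑(hM.eigenvalues j)) * (1 + c * ↑(hM.eigenvalues j))⁻¹)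
        = fun _ => (1 : ℂ) := by
      funext j; exact mul_inv_cancel₀ (hne j)
    rw [this, Matrix.diagonal_one, Matrix.mul_one, hUU]
  have hst : M = U * Matrix.diagonal (Complex.ofReal ∘ hM.eigenvalues) * star U :=
    hM.spectral_theorem
  have hIM : Complex.I • M = U * (Complex.I • Matrix.diagonal (Complex.ofReal ∘ hM.eigenvalues)) * star U := by
    rw [mul_smul_comm, smul_mul_assoc, ← hst]
  rw [hinv, hIM, key, Matrix.trace_mul_cycle, ← Matrix.mul_assoc, hUU', Matrix.one_mul,
    smul_mul_assoc, Matrix.diagonal_mul_diagonal, Matrix.trace_smul, Matrix.trace_diagonal]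
  rw [Finset.smul_sum]
  congr 1; funext j
  simp [mul_assoc]

end Aux

lemma aux_deriv (lam t : ℝ) :
    HasDerivAt (fun s : ℝ => Complex.log (1 + (s : ℂ) * Complex.I * (lam : ℂ)))
      (Complex.I * lam * (1 + (t : ℂ) * Complex.I * lam)⁻¹) t := by
  have h1 : HasDerivAt (fun z : ℂ => 1 + z * (Complex.I * lam)) (Complex.I * lam) (t : ℂ) := by
    simpa using ((hasDerivAt_id ((t : ℝ) : ℂ)).mul_const (Complex.I * lam)).const_add 1
  have hmem : (1 + (t : ℂ) * (Complex.I * (lam : ℂ))) ∈ Complex.slitPlane := by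
    rw [Complex.mem_slitPlane_iff]; left; simp
  have h3 := ((Complex.hasDerivAt_log hmem).comp ((t : ℝ) : ℂ) h1).comp_ofReal
  have : Complex.I * lam * (1 + (t : ℂ) * Complex.I * lam)⁻¹
      = (1 + (t:ℂ) * (Complex.I * (lam:ℂ)))⁻¹ * (Complex.I * lam) := by ring
  simpa only [this, Function.comp_def, ← mul_assoc] using h3

lemma aux_ne (t lam : ℝ) : (1 : ℂ) + (t : ℂ) * Complex.I * (lam : ℂ) ≠ 0 := by
  intro h
  have := congrArg Complex.re h
  simp at this

/-- For `n ≥ 1` there is a unique continuous function `Φ̃ : Sym(n) → ℂ`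
on the space of real symmetric `n×n` matrices such that `Φ̃ 0 = 0` and
`exp (Φ̃ A) = det (I + iA)` for every symmetric `A`. -/
theorem stmt_4 (n : ℕ) (hn : 1 ≤ n) :
    ∃! Φ : {A : Matrix (Fin n) (Fin n) ℝ // A.IsSymm} → ℂ,
      Continuous Φ ∧
      Φ ⟨0, Matrix.transpose_zero⟩ = 0 ∧
      ∀ A : {A : Matrix (Fin n) (Fin n) ℝ // A.IsSymm},
        Complex.exp (Φ A) = (1 + Complex.I • A.1.map Complex.ofReal).det := by
  classical
  set X := {A : Matrix (Fin n) (Fin n) ℝ // A.IsSymm} with hX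
  -- the integrand
  set g : X → ℝ → ℂ := fun A t =>
    Matrix.trace ((Complex.I • (A.1.map Complex.ofReal)) *
      (1 + ((t : ℂ) * Complex.I) • (A.1.map Complex.ofReal))⁻¹) with hg
  set Φ : X → ℂ := fun A => ∫ t in (0:ℝ)..1, g A t with hΦ
  -- eigenvalue description of g
  have hgval : ∀ (A : X) (t : ℝ), g A t
      = ∑ j, Complex.I * ((aux_herm A.2).eigenvalues j)
          * (1 + (t : ℂ) * Complex.I * ((aux_herm A.2).eigenvalues j))⁻¹ := by
    intro A t
    exact aux_trace (aux_herm A.2) ((t : ℂ) * Complex.I) (fun j => aux_ne t _)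
  have hne1 : ∀ (A : X) j, (1 : ℂ) + Complex.I * ((aux_herm A.2).eigenvalues j) ≠ 0 := by
    intro A j
    simpa using aux_ne 1 ((aux_herm A.2).eigenvalues j)
  have hcontj : ∀ lam : ℝ,
      Continuous fun t : ℝ => Complex.I * (lam:ℂ) * (1 + (t:ℂ) * Complex.I * (lam:ℂ))⁻¹ := by
    intro lam
    exact continuous_const.mul ((continuous_const.add
      ((Complex.continuous_ofReal.mul continuous_const).mul continuous_const)).inv₀
        (fun t => aux_ne t lam))
  have hΦval : ∀ A : X,
      Φ A = ∑ j, Complex.log (1 + Complex.I * ((aux_herm A.2).eigenvalues j)) := by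
    intro A
    have h1 : Φ A = ∫ t in (0:ℝ)..1, ∑ j, Complex.I * ((aux_herm A.2).eigenvalues j)
        * (1 + (t : ℂ) * Complex.I * ((aux_herm A.2).eigenvalues j))⁻¹ :=
      intervalIntegral.integral_congr (fun t _ => hgval A t)
    rw [h1, intervalIntegral.integral_finset_sum
      (fun j _ => (hcontj ((aux_herm A.2).eigenvalues j)).intervalIntegrable 0 1)]
    refine Finset.sum_congr rfl (fun j _ => ?_)
    set lam := (aux_herm A.2).eigenvalues j
    have := intervalIntegral.integral_eq_sub_of_hasDerivAt
      (f := fun s : ℝ => Complex.log (1 + (s : ℂ) * Complex.I * (lam : ℂ)))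
      (fun t _ => aux_deriv lam t) ((hcontj lam).intervalIntegrable 0 1)
    rw [this]
    norm_num
  have hexp : ∀ A : X,
      Complex.exp (Φ A) = (1 + Complex.I • A.1.map Complex.ofReal).det := by
    intro A
    rw [hΦval A, Complex.exp_sum, aux_det (aux_herm A.2) Complex.I]
    exact Finset.prod_congr rfl (fun j _ => Complex.exp_log (hne1 A j))
  have hΦ0 : Φ ⟨0, Matrix.transpose_zero⟩ = 0 := by
    have hz : ∀ t : ℝ, g ⟨0, Matrix.transpose_zero⟩ t = 0 := by
      intro t
      rw [hg]
      simp
    simp only [hΦ, intervalIntegral.integral_congr (g := fun _ => (0:ℂ)) (fun t _ => hz t),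
      intervalIntegral.integral_zero]
  have hgcont : Continuous (Function.uncurry g) := by
    have hMc : Continuous fun p : X × ℝ => (p.1.1.map Complex.ofReal) :=
      ((continuous_subtype_val.comp continuous_fst).matrix_map Complex.continuous_ofReal)
    have hNc : Continuous fun p : X × ℝ =>
        (1 + ((p.2:ℂ) * Complex.I) • (p.1.1.map Complex.ofReal)) :=
      continuous_const.add
        (((Complex.continuous_ofReal.comp continuous_snd).mul continuous_const).smul hMc)
    have hdet0 : ∀ p : X × ℝ,
        (1 + ((p.2:ℂ) * Complex.I) • (p.1.1.map Complex.ofReal)).det ≠ 0 := by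
      intro p
      rw [aux_det (aux_herm p.1.2)]
      exact Finset.prod_ne_zero_iff.mpr (fun j _ => aux_ne p.2 _)
    have hinveq : (fun p : X × ℝ => (1 + ((p.2:ℂ)*Complex.I) • (p.1.1.map Complex.ofReal))⁻¹)
        = fun p => (1 + ((p.2:ℂ)*Complex.I) • (p.1.1.map Complex.ofReal)).det⁻¹ •
            (1 + ((p.2:ℂ)*Complex.I) • (p.1.1.map Complex.ofReal)).adjugate := by
      funext p
      rw [Matrix.inv_def, Ring.inverse_eq_inv]
    have hinv : Continuous fun p : X × ℝ =>
        (1 + ((p.2:ℂ)*Complex.I) • (p.1.1.map Complex.ofReal))⁻¹ := by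
      rw [hinveq]
      exact ((hNc.matrix_det.inv₀ hdet0).smul hNc.matrix_adjugate)
    exact ((hMc.const_smul Complex.I).matrix_mul hinv).matrix_trace
  have hΦcont : Continuous Φ :=
    intervalIntegral.continuous_parametric_intervalIntegral_of_continuous' hgcont 0 1
  -- uniqueness
  refine ⟨Φ, ⟨hΦcont, hΦ0, hexp⟩, ?_⟩
  rintro Ψ ⟨hΨcont, hΨ0, hΨexp⟩
  -- X is preconnected
  have hconv : Convex ℝ {A : Matrix (Fin n) (Fin n) ℝ | A.IsSymm} := by
    intro A hA B hB a b _ _ _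
    exact Matrix.IsSymm.add (hA.smul a) (hB.smul b)
  haveI : PreconnectedSpace X := Subtype.preconnectedSpace hconv.isPreconnected
  have hdiff : ∀ A : X, Complex.exp (Ψ A - Φ A) = 1 := by
    intro A
    rw [Complex.exp_sub, hΨexp A, hexp A, div_self]
    rw [← hexp A]
    exact Complex.exp_ne_zero _
  set S : Set X := {A | Ψ A = Φ A} with hS
  have hSne : S.Nonempty := ⟨⟨0, Matrix.transpose_zero⟩, by simp [hS, hΨ0, hΦ0]⟩
  have hclosed : IsClosed S := isClosed_eq hΨcont hΦcont
  have hopen : IsOpen S := by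
    rw [isOpen_iff_mem_nhds]
    intro A hA
    have hcont : ContinuousAt (fun B => Ψ B - Φ B) A := (hΨcont.sub hΦcont).continuousAt
    have hball : ∀ᶠ B in nhds A, dist (Ψ B - Φ B) (Ψ A - Φ A) < 2 * Real.pi :=
      hcont.tendsto (Metric.ball_mem_nhds _ (by positivity))
    filter_upwards [hball] with B hB
    have hA0 : Ψ A - Φ A = 0 := sub_eq_zero.mpr hA
    obtain ⟨k, hk⟩ := Complex.exp_eq_one_iff.mp (hdiff B)
    have habs : ‖(k:ℂ) * (2 * Real.pi * Complex.I)‖ < 2 * Real.pi := by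
      rw [← hk]
      have hB' : dist (Ψ B - Φ B) (Ψ A - Φ A) < 2 * Real.pi := hB
      rw [Complex.dist_eq, hA0, sub_zero] at hB'
      exact hB'
    have h2 : |(k:ℝ)| * (2 * Real.pi) < 2 * Real.pi := by
      simpa [_root_.abs_of_nonneg Real.pi_pos.le, norm_mul, Complex.norm_real,
        Complex.norm_I, mul_comm, mul_assoc, mul_left_comm]
        using habs
    have hk0 : k = 0 := by
      by_contra hk0
      have : (1:ℝ) ≤ |(k:ℝ)| := by
        rw [← Int.cast_abs]
        exact_mod_cast Int.one_le_abs hk0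
      nlinarith [Real.pi_pos]
    have : Ψ B - Φ B = 0 := by rw [hk]; simp [hk0]
    exact sub_eq_zero.mp this
  have hclopen : IsClopen S := ⟨hclosed, hopen⟩
  have : S = Set.univ := hclopen.eq_univ hSne
  funext A
  exact (Set.eq_univ_iff_forall.mp this A : Ψ A = Φ A)
end

section
/- Let n ≥ 1 and let Φ̃ : Sym(n) → ℂ be the unique continuous function on the space of real symmetric n×n matrices with Φ̃(0) = 0 and exp(Φ̃(A)) = det(I + iA) for all A. Then for every real symmetric n×n matrix A with eigenvalues λ₁,…,λₙ (listed with multiplicity), Im(Φ̃(A)) = ∑_{j=1}^n arctan(λⱼ); in particular Im(Φ̃(A)) ∈ (−nπ/2, nπ/2). -/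
/-!
Along the ray `t ↦ t • A`, both `t ↦ Φ̃ (t • A)` and `t ↦ ∑ⱼ log (1 + i t λⱼ)` are continuous
logarithms of `det (I + i t A)` vanishing at `t = 0`: the second one because `A` is orthogonally
diagonalisable and every `1 + i t λⱼ` lies in the right half-plane. Since `exp` is a covering map,
the two logarithms coincide, and `Im log (1 + i λ) = arctan λ`.
-/

open Matrix Complex

namespace Matrix.IsHermitian

variable {ι R : Type*} [Fintype ι] [DecidableEq ι] [CommRing R] [Algebra ℝ R]

theorem det_one_add_smul_map_algebraMap {A : Matrix ι ι ℝ} (hA : A.IsHermitian) (c : R) :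
    (1 + c • A.map (algebraMap ℝ R)).det = ∏ i, (1 + c * algebraMap ℝ R (hA.eigenvalues i)) := by
  set U : Matrix ι ι ℝ := (hA.eigenvectorUnitary : Matrix ι ι ℝ)
  have hspec : A.map (algebraMap ℝ R) = U.map (algebraMap ℝ R) *
      diagonal (fun i => algebraMap ℝ R (hA.eigenvalues i)) * (star U).map (algebraMap ℝ R) := by
    conv_lhs => rw [hA.spectral_theorem, Unitary.conjStarAlgAut_apply]
    simp [Matrix.map_mul, U]
  have hunit : (star U).map (algebraMap ℝ R) * U.map (algebraMap ℝ R) = 1 := by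
    rw [← Matrix.map_mul, Unitary.coe_star_mul_self, Matrix.map_one _ (map_zero _) (map_one _)]
  rw [hspec, Matrix.mul_assoc, ← Matrix.mul_smul, det_one_add_mul_comm, Matrix.smul_mul,
    Matrix.mul_assoc, hunit, Matrix.mul_one, ← diagonal_smul, ← diagonal_one, diagonal_add,
    det_diagonal]
  simp

end Matrix.IsHermitian

namespace Complex

theorem eq_of_continuous_of_exp_eq {X : Type*} [TopologicalSpace X] [PreconnectedSpace X]
    {f g : X → ℂ} (hf : Continuous f) (hg : Continuous g) (hexp : ∀ x, exp (f x) = exp (g x))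
    (x₀ : X) (h₀ : f x₀ = g x₀) : f = g :=
  isCoveringMap_exp.eq_of_comp_eq hf hg (funext fun x => Subtype.ext (hexp x)) x₀ h₀

theorem one_add_I_mul_ofReal_mem_slitPlane (x : ℝ) : 1 + I * x ∈ slitPlane :=
  mem_slitPlane_iff.mpr (Or.inl (by simp))

theorem arg_one_add_I_mul_ofReal (x : ℝ) : arg (1 + I * x) = Real.arctan x := by
  have hre : (1 + I * x).re = 1 := by simp
  have him : (1 + I * x).im = x := by simp
  have hbound : |arg (1 + I * x)| < Real.pi / 2 := abs_arg_lt_pi_div_two_iff.mpr (Or.inl (by simp))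
  rw [abs_lt] at hbound
  rw [← Real.arctan_tan hbound.1 hbound.2, tan_arg, hre, him, div_one]

end Complex

theorem Real.sum_arctan_mem_Ioo {ι : Type*} [Fintype ι] [Nonempty ι] (x : ι → ℝ) :
    ∑ i, Real.arctan (x i) ∈
      Set.Ioo (-(Fintype.card ι * Real.pi / 2)) (Fintype.card ι * Real.pi / 2) := by
  have hlow := Finset.sum_lt_sum_of_nonempty Finset.univ_nonempty
    fun i (_ : i ∈ Finset.univ) => Real.neg_pi_div_two_lt_arctan (x i)
  have hupp := Finset.sum_lt_sum_of_nonempty Finset.univ_nonempty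
    fun i (_ : i ∈ Finset.univ) => Real.arctan_lt_pi_div_two (x i)
  simp only [Finset.sum_const, Finset.card_univ, nsmul_eq_mul] at hlow hupp
  constructor <;> linarith

/-- Let `Φ̃ : Sym(n) → ℂ` be the (unique) continuous function on the space
of real symmetric `n×n` matrices with `Φ̃ 0 = 0` and `exp (Φ̃ A) = det (I + iA)` for all
`A`. Then for every real symmetric `A` with eigenvalues `λ₁, …, λₙ`,
`Im (Φ̃ A) = ∑ j, arctan λⱼ`; in particular `Im (Φ̃ A) ∈ (-nπ/2, nπ/2)`. -/
theorem stmt_5 (n : ℕ) (hn : 1 ≤ n)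
    (Φ : {A : Matrix (Fin n) (Fin n) ℝ // A.IsSymm} → ℂ)
    (hΦcont : Continuous Φ)
    (hΦ0 : Φ ⟨0, Matrix.transpose_zero⟩ = 0)
    (hΦexp : ∀ A : {A : Matrix (Fin n) (Fin n) ℝ // A.IsSymm},
      Complex.exp (Φ A) = (1 + Complex.I • A.1.map Complex.ofReal).det)
    (A : {A : Matrix (Fin n) (Fin n) ℝ // A.IsSymm}) (hA : A.1.IsHermitian) :
    (Φ A).im = ∑ j, Real.arctan (hA.eigenvalues j) ∧
    (Φ A).im ∈ Set.Ioo (-(n * Real.pi / 2)) (n * Real.pi / 2) := by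
  have : Nonempty (Fin n) := ⟨⟨0, hn⟩⟩
  let ray : ℝ → {A : Matrix (Fin n) (Fin n) ℝ // A.IsSymm} := fun t => ⟨t • A.1, A.2.smul t⟩
  have hlift : (fun t => Φ (ray t)) = fun t : ℝ => ∑ j, log (1 + I * ↑(t * hA.eigenvalues j)) := by
    refine eq_of_continuous_of_exp_eq
      (hΦcont.comp ((continuous_id.smul continuous_const).subtype_mk _))
      (continuous_finsetSum _ fun j _ => Continuous.clog (by fun_prop)
        fun t => one_add_I_mul_ofReal_mem_slitPlane _) (fun t => ?_) 0 ?_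
    · have hmap : (t • A.1).map ofReal = (t : ℂ) • A.1.map (algebraMap ℝ ℂ) := by
        ext i j; simp
      rw [hΦexp, exp_sum, hmap, smul_smul, hA.det_one_add_smul_map_algebraMap]
      refine Finset.prod_congr rfl fun j _ => ?_
      rw [exp_log (slitPlane_ne_zero (one_add_I_mul_ofReal_mem_slitPlane _))]
      push_cast [coe_algebraMap]
      ring
    · simp [ray, hΦ0]
  have hΦA : Φ A = ∑ j, log (1 + I * hA.eigenvalues j) := by simpa [ray] using congrFun hlift 1
  have him : (Φ A).im = ∑ j, Real.arctan (hA.eigenvalues j) := by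
    simp [hΦA, log_im, arg_one_add_I_mul_ofReal]
  refine ⟨him, him ▸ ?_⟩
  simpa using Real.sum_arctan_mem_Ioo hA.eigenvalues
end

section
/- Let n ≥ 1, let A be a real symmetric n×n matrix with eigenvalues λ₁,…,λₙ (listed with multiplicity), let ρ > 0 and θ ∈ ℝ, and let χ₀(A),…,χₙ(A) be determined by det(I + tA) = ∑_{k=0}^n χ_k(A)·t^k for all t ∈ ℝ. Then ∑_{j=1}^n arctan(ρ·λⱼ) ∈ θ + πℤ (i.e. there is m ∈ ℤ with ∑_j arctan(ρλⱼ) = θ + mπ) if and only if sin(θ)·∑_{k : 0 ≤ 2k ≤ n} (−1)^k ρ^{2k} χ_{2k}(A) = cos(θ)·∑_{k : 0 ≤ 2k+1 ≤ n} (−1)^k ρ^{2k+1} χ_{2k+1}(A). -/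
open Complex Polynomial in
private lemma stmt7_sum_even (g : ℕ → ℝ) (N : ℕ) (hg : ∀ k, Odd k → g k = 0) :
    ∑ k ∈ Finset.range N, g k = ∑ j ∈ Finset.range ((N + 1) / 2), g (2 * j) := by
  induction N with
  | zero => simp
  | succ N ih =>
    rw [Finset.sum_range_succ, ih]
    rcases Nat.even_or_odd N with ⟨m, hm⟩ | hodd
    · subst hm
      have h1 : (m + m + 1) / 2 = m := by omega
      have h2 : (m + m + 1 + 1) / 2 = m + 1 := by omega
      rw [h1, h2, Finset.sum_range_succ]
      have : 2 * m = m + m := by omega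
      rw [this]
    · rw [hg N hodd, add_zero]
      have : (N + 1 + 1) / 2 = (N + 1) / 2 := by
        obtain ⟨m, hm⟩ := hodd; omega
      rw [this]

private lemma stmt7_sum_odd (g : ℕ → ℝ) (N : ℕ) (hg : ∀ k, Even k → g k = 0) :
    ∑ k ∈ Finset.range N, g k = ∑ j ∈ Finset.range (N / 2), g (2 * j + 1) := by
  induction N with
  | zero => simp
  | succ N ih =>
    rw [Finset.sum_range_succ, ih]
    rcases Nat.even_or_odd N with heven | ⟨m, hm⟩
    · rw [hg N heven, add_zero]
      have : (N + 1) / 2 = N / 2 := by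
        obtain ⟨m, hm⟩ := heven; omega
      rw [this]
    · subst hm
      have h1 : (2 * m + 1) / 2 = m := by omega
      have h2 : (2 * m + 1 + 1) / 2 = m + 1 := by omega
      rw [h1, h2, Finset.sum_range_succ]

open Complex in
private lemma stmt7_factor (y : ℝ) :
    (1 : ℂ) + (y : ℂ) * I = (Real.sqrt (1 + y ^ 2) : ℂ) * Complex.exp ((Real.arctan y : ℂ) * I) := by
  rw [Complex.exp_mul_I]
  have hs : Real.sqrt (1 + y ^ 2) ≠ 0 := by positivity
  have hs' : (Real.sqrt (1 + y ^ 2) : ℂ) ≠ 0 := by exact_mod_cast hs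
  rw [← Complex.ofReal_cos, ← Complex.ofReal_sin, Real.cos_arctan, Real.sin_arctan]
  push_cast
  field_simp

/-- Let `A` be a real symmetric `n×n` matrix with eigenvalues `λ₁, …, λₙ`,
`ρ > 0`, `θ ∈ ℝ`, and let `χ₀(A), …, χₙ(A)` be determined by
`det (I + tA) = ∑_{k=0}^n χ_k t^k` for all `t ∈ ℝ`. Then
`∑ j, arctan (ρ λⱼ) ∈ θ + πℤ` iff
`sin θ · ∑_{0 ≤ 2k ≤ n} (-1)^k ρ^{2k} χ_{2k} = cos θ · ∑_{0 ≤ 2k+1 ≤ n} (-1)^k ρ^{2k+1} χ_{2k+1}`. -/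
theorem stmt_7 (n : ℕ) (hn : 1 ≤ n) (A : Matrix (Fin n) (Fin n) ℝ) (hA : A.IsHermitian)
    (ρ : ℝ) (hρ : 0 < ρ) (θ : ℝ) (χ : ℕ → ℝ)
    (hχ : ∀ t : ℝ, (1 + t • A).det = ∑ k ∈ Finset.range (n + 1), χ k * t ^ k) :
    (∃ m : ℤ, ∑ j, Real.arctan (ρ * hA.eigenvalues j) = θ + m * Real.pi) ↔
    Real.sin θ *
        (∑ k ∈ Finset.range (n / 2 + 1), (-1) ^ k * ρ ^ (2 * k) * χ (2 * k))
      = Real.cos θ *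
        (∑ k ∈ Finset.range ((n + 1) / 2), (-1) ^ k * ρ ^ (2 * k + 1) * χ (2 * k + 1)) := by
  classical
  open Complex Polynomial Matrix in
  set lam : Fin n → ℝ := hA.eigenvalues with hlam
  set S : ℝ := ∑ j, Real.arctan (ρ * lam j) with hSdef
  set R : ℝ := ∏ j, Real.sqrt (1 + (ρ * lam j) ^ 2) with hRdef
  have hRpos : 0 < R := Finset.prod_pos (fun j _ => by positivity)
  -- Step 1: det(1 + t•A) = ∏ (1 + t λⱼ)
  have hdet : ∀ t : ℝ, (1 + t • A).det = ∏ j, (1 + t * lam j) := by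
    intro t
    have hU := (Matrix.mem_unitaryGroup_iff).mp (hA.eigenvectorUnitary).2
    have h1 : (1 : Matrix (Fin n) (Fin n) ℝ) + t • A
        = hA.eigenvectorUnitary * (1 + t • Matrix.diagonal lam) *
          star (hA.eigenvectorUnitary : Matrix (Fin n) (Fin n) ℝ) := by
      rw [mul_add, add_mul, mul_one, hU]
      congr 1
      rw [Matrix.mul_smul, Matrix.smul_mul]
      congr 1
      have := hA.spectral_theorem
      simpa using this
    rw [h1, Matrix.det_mul, Matrix.det_mul, mul_comm, ← mul_assoc, ← Matrix.det_mul]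
    rw [show star (hA.eigenvectorUnitary : Matrix (Fin n) (Fin n) ℝ) * ↑hA.eigenvectorUnitary = 1 from
      (Matrix.mem_unitaryGroup_iff').mp (hA.eigenvectorUnitary).2]
    have : (1 : Matrix (Fin n) (Fin n) ℝ) + t • Matrix.diagonal lam
        = Matrix.diagonal (fun j => 1 + t * lam j) := by
      ext i j
      by_cases h : i = j <;> simp [Matrix.diagonal, Matrix.one_apply, h, mul_comm]
    rw [this]
    simp [Matrix.det_diagonal]
  have h1 : ∀ t : ℝ, ∏ j, (1 + t * lam j) = ∑ k ∈ Finset.range (n + 1), χ k * t ^ k :=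
    fun t => (hdet t).symm.trans (hχ t)
  -- Step 2: the same identity evaluated at the complex number z = ρ·i
  have h2 : ∀ z : ℂ, ∏ j, (1 + (lam j : ℂ) * z)
      = ∑ k ∈ Finset.range (n + 1), (χ k : ℂ) * z ^ k := by
    intro z
    have hp : (∏ j, (1 + C (lam j) * X) : ℝ[X])
        = ∑ k ∈ Finset.range (n + 1), C (χ k) * X ^ k := by
      apply Polynomial.funext
      intro t
      simp only [eval_prod, eval_add, eval_one, eval_mul, eval_C, eval_X, eval_finset_sum,
        eval_pow]
      simp only [mul_comm (lam _) t]
      exact h1 t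
    have := congrArg (Polynomial.aeval z) hp
    simp only [map_prod, map_sum, _root_.map_add, _root_.map_mul, _root_.map_one, map_pow,
      aeval_C, aeval_X, Complex.coe_algebraMap] at this
    exact this
  -- Step 3: the product in polar form
  have h3 : ∏ j, (1 + (lam j : ℂ) * ((ρ : ℂ) * I)) = (R : ℂ) * Complex.exp ((S : ℂ) * I) := by
    have hterm : ∀ j : Fin n, (1 : ℂ) + (lam j : ℂ) * ((ρ : ℂ) * I)
        = (Real.sqrt (1 + (ρ * lam j) ^ 2) : ℂ) *
          Complex.exp ((Real.arctan (ρ * lam j) : ℂ) * I) := by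
      intro j
      have := stmt7_factor (ρ * lam j)
      push_cast at this ⊢
      rw [← this]; ring
    rw [Finset.prod_congr rfl (fun j _ => hterm j), Finset.prod_mul_distrib, ← Complex.exp_sum]
    congr 1
    · rw [hRdef]; push_cast; ring
    · rw [← Finset.sum_mul, hSdef]; push_cast; ring
  -- Combined identity in cartesian form
  have hkey : (↑(R * Real.cos S) : ℂ) + (↑(R * Real.sin S) : ℂ) * I
      = ∑ k ∈ Finset.range (n + 1), (χ k : ℂ) * ((ρ : ℂ) * I) ^ k := by
    rw [← h2, h3, Complex.exp_mul_I, ← Complex.ofReal_cos, ← Complex.ofReal_sin]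
    push_cast; ring
  -- powers of ρ·i
  have hpow_even : ∀ m : ℕ, ((ρ : ℂ) * I) ^ (2 * m) = ((((-1 : ℝ)) ^ m * ρ ^ (2 * m) : ℝ) : ℂ) := by
    intro m
    rw [pow_mul]
    have h2' : ((ρ : ℂ) * I) ^ 2 = ((-(ρ ^ 2) : ℝ) : ℂ) := by
      rw [mul_pow, Complex.I_sq]; push_cast; ring
    rw [h2', ← Complex.ofReal_pow]
    push_cast
    rw [pow_mul]
    ring
  have hpow_odd : ∀ m : ℕ, ((ρ : ℂ) * I) ^ (2 * m + 1)
      = ((((-1 : ℝ)) ^ m * ρ ^ (2 * m + 1) : ℝ) : ℂ) * I := by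
    intro m
    rw [pow_succ, hpow_even m]
    push_cast
    ring
  -- real and imaginary parts of each term
  set g : ℕ → ℝ := fun k => χ k * (((ρ : ℂ) * I) ^ k).re with hg
  set gi : ℕ → ℝ := fun k => χ k * (((ρ : ℂ) * I) ^ k).im with hgi
  have hgodd : ∀ k, Odd k → g k = 0 := by
    rintro k ⟨m, hm⟩
    have hk : k = 2 * m + 1 := by omega
    subst hk
    simp only [hg]
    rw [hpow_odd m, Complex.mul_re, Complex.ofReal_re, Complex.ofReal_im, Complex.I_re,
      Complex.I_im]
    ring
  have hgieven : ∀ k, Even k → gi k = 0 := by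
    rintro k ⟨m, hm⟩
    have hk : k = 2 * m := by omega
    subst hk
    simp only [hgi]
    rw [hpow_even m, Complex.ofReal_im]
    ring
  have hgval : ∀ m : ℕ, g (2 * m) = (-1) ^ m * ρ ^ (2 * m) * χ (2 * m) := by
    intro m
    simp only [hg]
    rw [hpow_even m, Complex.ofReal_re]
    ring
  have hgival : ∀ m : ℕ, gi (2 * m + 1) = (-1) ^ m * ρ ^ (2 * m + 1) * χ (2 * m + 1) := by
    intro m
    simp only [hgi]
    rw [hpow_odd m, Complex.mul_im, Complex.ofReal_re, Complex.ofReal_im, Complex.I_re,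
      Complex.I_im]
    ring
  -- real part identity
  have hre : R * Real.cos S = ∑ k ∈ Finset.range (n / 2 + 1),
      (-1) ^ k * ρ ^ (2 * k) * χ (2 * k) := by
    have := congrArg Complex.re hkey
    simp only [Complex.add_re, Complex.ofReal_re, Complex.mul_re, Complex.I_re, Complex.I_im,
      Complex.ofReal_im, Complex.re_sum, mul_zero, zero_mul, sub_zero, add_zero] at this
    have h' : R * Real.cos S = ∑ k ∈ Finset.range (n + 1), g k := this
    rw [h', stmt7_sum_even g (n + 1) hgodd]
    have hhalf : (n + 1 + 1) / 2 = n / 2 + 1 := by omega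
    rw [hhalf]
    exact Finset.sum_congr rfl fun k _ => hgval k
  -- imaginary part identity
  have him : R * Real.sin S = ∑ k ∈ Finset.range ((n + 1) / 2),
      (-1) ^ k * ρ ^ (2 * k + 1) * χ (2 * k + 1) := by
    have := congrArg Complex.im hkey
    simp only [Complex.add_im, Complex.ofReal_im, Complex.mul_im, Complex.I_re, Complex.I_im,
      Complex.ofReal_re, Complex.im_sum, mul_zero, zero_mul, mul_one, sub_zero, add_zero,
      zero_add] at this
    have h' : R * Real.sin S = ∑ k ∈ Finset.range (n + 1), gi k := this
    rw [h', stmt7_sum_odd gi (n + 1) hgieven]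
    exact Finset.sum_congr rfl fun k _ => hgival k
  rw [← hre, ← him]
  -- final trigonometric equivalence
  constructor
  · rintro ⟨m, hm⟩
    have hsin : Real.sin (θ - S) = 0 := by
      rw [hm]
      have : θ - (θ + m * Real.pi) = (-m) * Real.pi := by ring
      rw [this]
      simpa using Real.sin_int_mul_pi (-m)
    rw [Real.sin_sub] at hsin
    linear_combination R * hsin
  · intro h
    have h0 : R * (Real.sin θ * Real.cos S - Real.cos θ * Real.sin S) = 0 := by
      linear_combination h
    have hsin : Real.sin (θ - S) = 0 := by
      rw [Real.sin_sub]
      rcases mul_eq_zero.mp h0 with h' | h'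
      · exact absurd h' hRpos.ne'
      · exact h'
    rw [Real.sin_eq_zero_iff] at hsin
    obtain ⟨k, hk⟩ := hsin
    exact ⟨-k, by push_cast; linarith⟩
end

section
/- Let n ≥ 1, let A be a positive definite real symmetric n×n matrix with eigenvalues λ₁,…,λₙ (listed with multiplicity), and let χ₀(A),…,χₙ(A) be determined by det(I + tA) = ∑_{k=0}^n χ_k(A)·t^k for all t ∈ ℝ. If r > 0 satisfies ∑_{j=1}^n arctan(r·λⱼ) = (n−1)π/2, then ∑_{k : 0 ≤ 2k ≤ n} (−1)^k · r^{n−2k} · χ_{n−2k}(A) = 0. -/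
open Complex in
private lemma stmt8_aux_exp (b : ℝ) :
    (1 : ℂ) + (b : ℂ) * I = (Real.sqrt (1 + b ^ 2) : ℂ) * Complex.exp ((Real.arctan b : ℂ) * I) := by
  have h0 : Real.sqrt (1 + b ^ 2) ≠ 0 := by positivity
  rw [Complex.exp_mul_I, ← Complex.ofReal_cos, ← Complex.ofReal_sin,
    Real.cos_arctan, Real.sin_arctan]
  have h0' : (Real.sqrt (1 + b ^ 2) : ℂ) ≠ 0 := by exact_mod_cast h0
  push_cast
  field_simp

private lemma stmt8_exp_pi_div_two : Complex.exp ((Real.pi / 2 : ℝ) * Complex.I) = Complex.I := by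
  rw [Complex.exp_mul_I, ← Complex.ofReal_cos, ← Complex.ofReal_sin]
  simp

/-- Let `A` be a positive definite real symmetric `n×n` matrix with
eigenvalues `λ₁, …, λₙ` and higher principal curvatures `χ₀, …, χₙ` determined by
`det (I + tA) = ∑_{k=0}^n χ_k t^k` for all `t`. If `r > 0` satisfies
`∑ j, arctan (r λⱼ) = (n-1)π/2`, then `∑_{0 ≤ 2k ≤ n} (-1)^k r^{n-2k} χ_{n-2k} = 0`. -/
theorem stmt_8 (n : ℕ) (hn : 1 ≤ n) (A : Matrix (Fin n) (Fin n) ℝ) (hA : A.PosDef)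
    (χ : ℕ → ℝ)
    (hχ : ∀ t : ℝ, (1 + t • A).det = ∑ k ∈ Finset.range (n + 1), χ k * t ^ k)
    (r : ℝ) (hr : 0 < r)
    (hSL : ∑ j, Real.arctan (r * hA.1.eigenvalues j) = ((n : ℝ) - 1) * Real.pi / 2) :
    ∑ k ∈ Finset.range (n / 2 + 1), (-1) ^ k * r ^ (n - 2 * k) * χ (n - 2 * k) = 0 := by
  set lam : Fin n → ℝ := hA.1.eigenvalues with hlam
  -- Step 1: det (1 + t A) = ∏ (1 + t λⱼ)
  have hprod : ∀ t : ℝ, (1 + t • A).det = ∏ j, (1 + t * lam j) := by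
    intro t
    set U := (Matrix.IsHermitian.eigenvectorUnitary hA.1 : Matrix (Fin n) (Fin n) ℝ) with hU
    have hUU : U * star U = 1 :=
      Matrix.mem_unitaryGroup_iff.mp (Matrix.IsHermitian.eigenvectorUnitary hA.1).2
    have hspec : A = U * Matrix.diagonal lam * star U := by
      simpa using hA.1.spectral_theorem
    have hconj : 1 + t • A = U * (1 + t • Matrix.diagonal lam) * star U := by
      rw [Matrix.mul_add, Matrix.add_mul, Matrix.mul_one, hUU]
      congr 1
      rw [Matrix.mul_smul, Matrix.smul_mul, ← hspec]
    rw [hconj, Matrix.det_mul, Matrix.det_mul]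
    have hdet : U.det * (star U).det = 1 := by rw [← Matrix.det_mul, hUU, Matrix.det_one]
    have hd : (1 + t • Matrix.diagonal lam) = Matrix.diagonal (fun j => 1 + t * lam j) := by
      rw [← Matrix.diagonal_one, ← Matrix.diagonal_smul, ← Matrix.diagonal_add]
      rfl
    rw [hd, Matrix.det_diagonal]
    calc (U.det * ∏ j, (1 + t * lam j)) * (star U).det
        = (U.det * (star U).det) * ∏ j, (1 + t * lam j) := by ring
      _ = _ := by rw [hdet, one_mul]
  have hreal : ∀ t : ℝ, ∏ j, (1 + t * lam j) = ∑ k ∈ Finset.range (n+1), χ k * t ^ k :=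
    fun t => (hprod t).symm.trans (hχ t)
  -- Step 2: extend to ℂ via polynomials
  have hpolyC : ∀ z : ℂ, ∏ j, (1 + z * (lam j : ℂ)) =
      ∑ k ∈ Finset.range (n+1), (χ k : ℂ) * z ^ k := by
    have hp : (∏ j, (1 + Polynomial.C (lam j) * Polynomial.X) : Polynomial ℝ)
        = ∑ k ∈ Finset.range (n+1), Polynomial.C (χ k) * Polynomial.X ^ k := by
      apply Polynomial.funext
      intro t
      simp only [Polynomial.eval_prod, Polynomial.eval_finset_sum, Polynomial.eval_add,
        Polynomial.eval_one, Polynomial.eval_mul, Polynomial.eval_C, Polynomial.eval_pow,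
        Polynomial.eval_X]
      simpa [mul_comm] using hreal t
    intro z
    have h := congrArg (Polynomial.aeval z) hp
    simp only [map_prod, map_sum, map_add, map_mul, map_one, map_pow,
      Polynomial.aeval_X, Polynomial.aeval_C, Complex.coe_algebraMap] at h
    simpa [mul_comm] using h
  -- Step 3: the product at I r is ρ I^(n-1)
  set ρ : ℝ := ∏ j, Real.sqrt (1 + (r * lam j) ^ 2) with hρ
  have hexp : Complex.exp ((((n : ℝ) - 1) * Real.pi / 2 : ℝ) * Complex.I)
      = Complex.I ^ (n - 1) := by
    have hcast : (((n : ℝ) - 1) * Real.pi / 2 : ℝ) = ((n - 1 : ℕ) : ℝ) * (Real.pi / 2) := by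
      rw [Nat.cast_sub hn]; push_cast; ring
    rw [hcast]
    push_cast
    rw [mul_assoc, Complex.exp_nat_mul,
      show ((Real.pi : ℂ) / 2 * Complex.I) = ((Real.pi / 2 : ℝ) : ℂ) * Complex.I by
        push_cast; ring,
      stmt8_exp_pi_div_two]
  have hP : ∏ j, ((1 : ℂ) + ((r * lam j : ℝ) : ℂ) * Complex.I)
      = (ρ : ℂ) * Complex.I ^ (n - 1) := by
    calc ∏ j, ((1 : ℂ) + ((r * lam j : ℝ) : ℂ) * Complex.I)
        = ∏ j, ((Real.sqrt (1 + (r * lam j) ^ 2) : ℂ) *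
            Complex.exp ((Real.arctan (r * lam j) : ℂ) * Complex.I)) :=
          Finset.prod_congr rfl fun j _ => stmt8_aux_exp (r * lam j)
      _ = (∏ j, (Real.sqrt (1 + (r * lam j) ^ 2) : ℂ)) *
            ∏ j, Complex.exp ((Real.arctan (r * lam j) : ℂ) * Complex.I) :=
          Finset.prod_mul_distrib
      _ = (ρ : ℂ) * Complex.I ^ (n - 1) := by
          congr 1
          · rw [hρ]; push_cast; rfl
          · rw [← Complex.exp_sum, ← Finset.sum_mul,
              show (∑ j, ((Real.arctan (r * lam j) : ℂ)))
                = ((∑ j, Real.arctan (r * lam j) : ℝ) : ℂ) by push_cast; rfl,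
              hSL, hexp]
  -- Step 4: the conjugate product
  have hQ : ∏ j, ((1 : ℂ) - ((r * lam j : ℝ) : ℂ) * Complex.I)
      = (ρ : ℂ) * ((-1 : ℂ) ^ (n - 1) * Complex.I ^ (n - 1)) := by
    have h := congrArg (starRingEnd ℂ) hP
    rw [map_prod, map_mul, map_pow] at h
    simp only [map_add, map_one, map_mul, Complex.conj_ofReal, Complex.conj_I] at h
    calc ∏ j, ((1 : ℂ) - ((r * lam j : ℝ) : ℂ) * Complex.I)
        = ∏ j, ((1 : ℂ) + ((r * lam j : ℝ) : ℂ) * (-Complex.I)) := by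
          apply Finset.prod_congr rfl; intro j _; ring
      _ = (ρ : ℂ) * (-Complex.I) ^ (n - 1) := h
      _ = (ρ : ℂ) * ((-1 : ℂ) ^ (n - 1) * Complex.I ^ (n - 1)) := by rw [neg_pow]
  -- Step 5: translate products into the χ sums
  have hsum1 : ∑ k ∈ Finset.range (n+1), (χ k : ℂ) * (Complex.I * r) ^ k
      = (ρ : ℂ) * Complex.I ^ (n - 1) := by
    rw [← hpolyC (Complex.I * r)]
    rw [← hP]
    apply Finset.prod_congr rfl; intro j _; push_cast; ring
  have hsum2 : ∑ k ∈ Finset.range (n+1), (χ k : ℂ) * (-(Complex.I * r)) ^ k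
      = (ρ : ℂ) * ((-1 : ℂ) ^ (n - 1) * Complex.I ^ (n - 1)) := by
    rw [← hpolyC (-(Complex.I * r))]
    rw [← hQ]
    apply Finset.prod_congr rfl; intro j _; push_cast; ring
  -- Step 6: the alternating-parity combination vanishes
  have hkey : ∑ k ∈ Finset.range (n+1),
      ((χ k : ℂ) * (Complex.I * r) ^ k * (1 + (-1 : ℂ) ^ (n + k))) = 0 := by
    have hsplit : ∀ k, (χ k : ℂ) * (Complex.I * r) ^ k * (1 + (-1 : ℂ) ^ (n + k))
        = (χ k : ℂ) * (Complex.I * r) ^ k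
          + (-1 : ℂ) ^ n * ((χ k : ℂ) * (-(Complex.I * r)) ^ k) := by
      intro k
      rw [pow_add, neg_pow]
      ring
    rw [Finset.sum_congr rfl fun k _ => hsplit k, Finset.sum_add_distrib,
      ← Finset.mul_sum, hsum1, hsum2]
    have hodd : ((-1 : ℂ)) ^ n * (-1 : ℂ) ^ (n - 1) = -1 := by
      rw [← pow_add]
      exact Odd.neg_one_pow ⟨n - 1, by omega⟩
    calc (ρ : ℂ) * Complex.I ^ (n - 1)
          + (-1 : ℂ) ^ n * ((ρ : ℂ) * ((-1 : ℂ) ^ (n - 1) * Complex.I ^ (n - 1)))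
        = (ρ : ℂ) * Complex.I ^ (n - 1) * (1 + (-1 : ℂ) ^ n * (-1 : ℂ) ^ (n - 1)) := by ring
      _ = 0 := by rw [hodd]; ring
  -- Step 7: identify the parity sum with the goal sum
  have hfinal : (2 : ℂ) * Complex.I ^ n *
      ((∑ k ∈ Finset.range (n / 2 + 1), (-1) ^ k * r ^ (n - 2 * k) * χ (n - 2 * k) : ℝ) : ℂ)
      = ∑ k ∈ Finset.range (n+1),
        ((χ k : ℂ) * (Complex.I * r) ^ k * (1 + (-1 : ℂ) ^ (n + k))) := by
    set T : Finset ℕ := (Finset.range (n / 2 + 1)).image (fun j => n - 2 * j) with hT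
    have hsub : T ⊆ Finset.range (n + 1) := by
      intro k hk
      simp only [hT, Finset.mem_image, Finset.mem_range] at hk ⊢
      obtain ⟨j, _, rfl⟩ := hk
      omega
    have hvanish : ∀ k ∈ Finset.range (n + 1), k ∉ T →
        (χ k : ℂ) * (Complex.I * r) ^ k * (1 + (-1 : ℂ) ^ (n + k)) = 0 := by
      intro k hk hkT
      simp only [Finset.mem_range] at hk
      have hoddnk : Odd (n + k) := by
        rcases Nat.even_or_odd (n + k) with he | ho
        · exfalso
          apply hkT
          obtain ⟨m, hm⟩ := he
          simp only [hT, Finset.mem_image, Finset.mem_range]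
          exact ⟨(n - k) / 2, by omega, by omega⟩
        · exact ho
      rw [Odd.neg_one_pow hoddnk]
      ring
    rw [← Finset.sum_subset hsub hvanish, hT,
      Finset.sum_image (by intro a ha b hb hab; simp only [Finset.mem_coe, Finset.mem_range] at ha hb hab; omega)]
    rw [Complex.ofReal_sum, Finset.mul_sum]
    apply Finset.sum_congr rfl
    intro j hj
    simp only [Finset.mem_range] at hj
    have h2j : 2 * j ≤ n := by omega
    have hIpow : Complex.I ^ (n - 2 * j) = Complex.I ^ n * (-1 : ℂ) ^ j := by
      have h1 : Complex.I ^ n = Complex.I ^ (n - 2 * j) * (-1 : ℂ) ^ j := by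
        conv_lhs => rw [show n = (n - 2 * j) + 2 * j by omega]
        rw [pow_add, pow_mul, Complex.I_sq]
      have h2 : ((-1 : ℂ) ^ j) * ((-1 : ℂ) ^ j) = 1 := by
        rw [← pow_add]; exact Even.neg_one_pow ⟨j, rfl⟩
      calc Complex.I ^ (n - 2 * j)
          = Complex.I ^ (n - 2 * j) * (((-1 : ℂ) ^ j) * ((-1 : ℂ) ^ j)) := by rw [h2, mul_one]
        _ = (Complex.I ^ (n - 2 * j) * (-1 : ℂ) ^ j) * (-1 : ℂ) ^ j := by ring
        _ = Complex.I ^ n * (-1 : ℂ) ^ j := by rw [← h1]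
    have heven : (-1 : ℂ) ^ (n + (n - 2 * j)) = 1 :=
      Even.neg_one_pow ⟨n - j, by omega⟩
    rw [heven, mul_pow, hIpow]
    push_cast
    ring
  -- conclude
  have h0 : (2 : ℂ) * Complex.I ^ n *
      ((∑ k ∈ Finset.range (n / 2 + 1), (-1) ^ k * r ^ (n - 2 * k) * χ (n - 2 * k) : ℝ) : ℂ)
      = 0 := hfinal.trans hkey
  have hne : (2 : ℂ) * Complex.I ^ n ≠ 0 :=
    mul_ne_zero two_ne_zero (pow_ne_zero _ Complex.I_ne_zero)
  have := (mul_eq_zero.mp h0).resolve_left hne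
  exact_mod_cast this
end

section
/- (λ-maximum lemma.) For every δ > 0 there exists λ > 0, depending only on δ, with the following property: for every metric space X and every point P ∈ X such that the closed ball of radius δ about P is complete, and for every locally bounded function f : X → (0,∞) with f(P) ≥ 1, there exists a point Q in the open ball B(P, δ) such that f(Q) ≥ f(P) and such that for every Q′ ∈ B(Q, ε) one has f(Q′) ≤ λ·f(Q), where ε := λ^{−1}·f(Q)^{−1/2}. -/
/-!
If no point of `B(P, δ)` were a `λ`-maximum point, starting from `P` we could repeatedly jump
from `q` to a point `q'` at distance less than `λ⁻¹ f(q)^{-1/2}` with `f q' > λ f q`. Then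
`f(qₙ) ≥ λⁿ`, so the jumps are bounded by `λ⁻¹ (λ^{-1/2})ⁿ`: the chain is Cauchy and, for
`λ = max 4 (4/δ)`, stays in the closed `δ/2`-ball. Its limit exists by completeness, and `f`
is unbounded near it, contradicting local boundedness.
-/

open Filter Metric Topology

theorem exists_seq_of_forall_exists_step {α : Type*} {p : ℕ → α → Prop} {r : ℕ → α → α → Prop}
    {a : α} (h₀ : p 0 a) (hstep : ∀ n x, p n x → ∃ y, p (n + 1) y ∧ r n x y) :
    ∃ u : ℕ → α, ∀ n, p n (u n) ∧ r n (u n) (u (n + 1)) := by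
  choose next hnext using hstep
  let v : ∀ n, {x // p n x} := fun n =>
    Nat.rec ⟨a, h₀⟩ (fun n x => ⟨next n x.1 x.2, (hnext n x.1 x.2).1⟩) n
  exact ⟨fun n => (v n).1, fun n => ⟨(v n).2, (hnext n (v n).1 (v n).2).2⟩⟩

theorem not_tendsto_atTop_of_locallyBounded {X : Type*} [TopologicalSpace X] {f : X → ℝ}
    (hf : ∀ x, ∃ B : ℝ, ∀ᶠ y in 𝓝 x, |f y| ≤ B) {u : ℕ → X} {x : X}
    (hu : Tendsto u atTop (𝓝 x)) : ¬ Tendsto (f ∘ u) atTop atTop := by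
  intro hfu
  obtain ⟨B, hB⟩ := hf x
  obtain ⟨n, hbounded, hlarge⟩ := ((hu.eventually hB).and (hfu.eventually_gt_atTop B)).exists
  exact hlarge.not_ge ((le_abs_self _).trans hbounded)

theorem Real.rpow_neg_half_le_of_pow_le {L y : ℝ} (hL : 0 < L) {n : ℕ} (hy : L ^ n ≤ y) :
    y ^ (-(1 / 2) : ℝ) ≤ (L ^ (-(1 / 2) : ℝ)) ^ n := by
  rw [Real.rpow_pow_comm hL.le]
  exact Real.rpow_le_rpow_of_nonpos (by positivity) hy (by norm_num)

theorem Real.rpow_neg_half_le_half {L : ℝ} (hL : 4 ≤ L) : L ^ (-(1 / 2) : ℝ) ≤ 1 / 2 := by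
  calc L ^ (-(1 / 2) : ℝ) ≤ (4 : ℝ) ^ (-(1 / 2) : ℝ) :=
        Real.rpow_le_rpow_of_nonpos (by norm_num) hL (by norm_num)
    _ = 1 / 2 := by
        rw [show (4 : ℝ) = 2 ^ (2 : ℝ) by norm_num, ← Real.rpow_mul (by norm_num)]
        norm_num

section LambdaMax

variable {X : Type*} [MetricSpace X]

def IsLambdaMaxPoint (lam : ℝ) (f : X → ℝ) (Q : X) : Prop :=
  ∀ Q' ∈ ball Q (lam⁻¹ * f Q ^ (-(1 / 2) : ℝ)), f Q' ≤ lam * f Q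

theorem exists_jump_of_not_isLambdaMaxPoint {L : ℝ} {f : X → ℝ} {q : X} {n : ℕ} (hL : 0 < L)
    (hq : L ^ n ≤ f q) (hnot : ¬ IsLambdaMaxPoint L f q) :
    ∃ q', L * f q < f q' ∧ dist q q' ≤ L⁻¹ * (L ^ (-(1 / 2) : ℝ)) ^ n := by
  simp only [IsLambdaMaxPoint, not_forall, not_le, exists_prop, mem_ball] at hnot
  obtain ⟨q', hdist, hjump⟩ := hnot
  refine ⟨q', hjump, ?_⟩
  rw [dist_comm]
  exact hdist.le.trans
    (mul_le_mul_of_nonneg_left (Real.rpow_neg_half_le_of_pow_le hL hq) (by positivity))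

theorem exists_seq_of_forall_not_isLambdaMaxPoint {L δ : ℝ} {f : X → ℝ} {P : X}
    (hL : 4 ≤ L) (hLδ : 4 ≤ L * δ) (hP : 1 ≤ f P)
    (hnot : ∀ Q ∈ ball P δ, f P ≤ f Q → ¬ IsLambdaMaxPoint L f Q) :
    ∃ u : ℕ → X, ∀ n, (L ^ n * f P ≤ f (u n) ∧ u n ∈ ball P δ)
      ∧ dist (u n) (u (n + 1)) ≤ L⁻¹ * (L ^ (-(1 / 2) : ℝ)) ^ n := by
  set t := L ^ (-(1 / 2) : ℝ)
  have hL₀ : 0 < L := by linarith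
  have ht₀ : 0 ≤ t := by positivity
  have ht : t ≤ 1 / 2 := Real.rpow_neg_half_le_half hL
  have hball : ∀ n q, dist P q ≤ 2 / L * (1 - t ^ n) → q ∈ ball P δ := by
    intro n q hq
    have : 2 / L ≤ δ / 2 := by rw [div_le_iff₀ hL₀]; linarith
    have := pow_nonneg ht₀ n
    have : 0 < 2 / L := by positivity
    rw [mem_ball, dist_comm]
    nlinarith
  -- `2 / L * (1 - tⁿ)` bounds the partial sums `L⁻¹ ∑_{k<n} tᵏ` of the jump lengths.
  obtain ⟨u, hu⟩ := exists_seq_of_forall_exists_step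
    (p := fun n q => L ^ n * f P ≤ f q ∧ dist P q ≤ 2 / L * (1 - t ^ n))
    (r := fun n q q' => dist q q' ≤ L⁻¹ * t ^ n) (a := P) ⟨by simp, by simp⟩ (by
      rintro n q ⟨hfq, hdist⟩
      have hLn : 1 ≤ L ^ n := one_le_pow₀ (by linarith)
      obtain ⟨q', hjump, hstep⟩ := exists_jump_of_not_isLambdaMaxPoint hL₀ (by nlinarith)
        (hnot q (hball n q hdist) (by nlinarith))
      refine ⟨q', ⟨?_, ?_⟩, hstep⟩
      · rw [pow_succ']
        nlinarith
      · calc dist P q' ≤ dist P q + dist q q' := dist_triangle _ _ _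
          _ ≤ 2 / L * (1 - t ^ n) + L⁻¹ * t ^ n := add_le_add hdist hstep
          _ ≤ 2 / L * (1 - t ^ (n + 1)) := by
            have := mul_le_mul_of_nonneg_left ht (pow_nonneg ht₀ n)
            rw [pow_succ, div_eq_mul_inv]
            nlinarith [inv_pos.mpr hL₀])
  exact ⟨u, fun n => ⟨⟨(hu n).1.1, hball n _ (hu n).1.2⟩, (hu n).2⟩⟩

theorem exists_isLambdaMaxPoint {L δ : ℝ} {f : X → ℝ} {P : X} (hL : 4 ≤ L) (hLδ : 4 ≤ L * δ)
    (hcomplete : IsComplete (closedBall P δ)) (hf : ∀ x, ∃ B : ℝ, ∀ᶠ y in 𝓝 x, |f y| ≤ B)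
    (hP : 1 ≤ f P) : ∃ Q ∈ ball P δ, f P ≤ f Q ∧ IsLambdaMaxPoint L f Q := by
  by_contra! hnot
  obtain ⟨u, hu⟩ := exists_seq_of_forall_not_isLambdaMaxPoint hL hLδ hP hnot
  have hmem : ∀ n, u n ∈ closedBall P δ := fun n => ball_subset_closedBall (hu n).1.2
  have hcauchy : CauchySeq u :=
    cauchySeq_of_le_geometric _ L⁻¹ (by linarith [Real.rpow_neg_half_le_half hL])
      fun n => (hu n).2
  obtain ⟨x, -, hx⟩ := cauchySeq_tendsto_of_isComplete hcomplete hmem hcauchy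
  refine not_tendsto_atTop_of_locallyBounded hf hx
    (tendsto_atTop_mono (fun n => ?_) (tendsto_pow_atTop_atTop_of_one_lt (by linarith : 1 < L)))
  exact (le_mul_of_one_le_right (by positivity) hP).trans (hu n).1.1

end LambdaMax

/-- λ-maximum lemma: for every `δ > 0` there exists `λ > 0`, depending
only on `δ`, such that for every metric space `X`, every point `P ∈ X` whose closed
`δ`-ball is complete, and every locally bounded function `f : X → (0, ∞)` with
`f P ≥ 1`, there exists `Q ∈ B(P, δ)` with `f Q ≥ f P` and such that
`f Q' ≤ λ · f Q` for all `Q' ∈ B(Q, ε)`, where `ε = λ⁻¹ · (f Q)^{-1/2}`. -/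
theorem stmt_11 (δ : ℝ) (hδ : 0 < δ) :
    ∃ lam : ℝ, 0 < lam ∧
      ∀ (X : Type*) [MetricSpace X] (P : X),
        IsComplete (Metric.closedBall P δ) →
        ∀ f : X → ℝ,
          (∀ x, 0 < f x) →
          (∀ x : X, ∃ B : ℝ, ∀ᶠ y in nhds x, |f y| ≤ B) →
          1 ≤ f P →
          ∃ Q ∈ Metric.ball P δ, f P ≤ f Q ∧
            ∀ Q' ∈ Metric.ball Q (lam⁻¹ * f Q ^ (-(1 / 2) : ℝ)), f Q' ≤ lam * f Q := by
  have hL : 4 ≤ max 4 (4 / δ) := le_max_left _ _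
  have hLδ : 4 ≤ max 4 (4 / δ) * δ := (div_le_iff₀ hδ).mp (le_max_right _ _)
  exact ⟨_, by linarith, fun X _ P hcomplete f _ hf hP =>
    exists_isLambdaMaxPoint hL hLδ hcomplete hf hP⟩
end

section
/- Let n ≥ 1, let A and H be real symmetric n×n matrices, and let θ ∈ ℝ. Then the function t ↦ Im(e^{−iθ}·det(I + i(A + tH))) is differentiable at t = 0 with derivative Im(e^{−iθ}·det(I + iA))·Tr(A(I + A²)^{−1}H) + Re(e^{−iθ}·det(I + iA))·Tr((I + A²)^{−1}H). In particular, if Im(e^{−iθ}·det(I + iA)) = 0, the derivative equals Re(e^{−iθ}·det(I + iA))·Tr((I + A²)^{−1}H), exhibiting the uniform ellipticity of the linearised special Lagrangian curvature equation. -/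
open Matrix Polynomial

/-- Let `A`, `H` be real symmetric `n×n` matrices and `θ ∈ ℝ`. The function
`t ↦ Im (e^{-iθ} · det (I + i(A + tH)))` is differentiable at `t = 0` with derivative
`Im (e^{-iθ} det (I + iA)) · Tr (A (I + A²)⁻¹ H) + Re (e^{-iθ} det (I + iA)) · Tr ((I + A²)⁻¹ H)`.
In particular, if `Im (e^{-iθ} det (I + iA)) = 0`, the derivative equals
`Re (e^{-iθ} det (I + iA)) · Tr ((I + A²)⁻¹ H)`. -/
theorem stmt_12 (n : ℕ) (hn : 1 ≤ n) (A H : Matrix (Fin n) (Fin n) ℝ)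
    (hA : A.IsSymm) (hH : H.IsSymm) (θ : ℝ) :
    HasDerivAt
      (fun t : ℝ =>
        (Complex.exp (-(θ : ℂ) * Complex.I) *
          (1 + Complex.I • (A + t • H).map Complex.ofReal).det).im)
      ((Complex.exp (-(θ : ℂ) * Complex.I) *
          (1 + Complex.I • A.map Complex.ofReal).det).im
          * Matrix.trace (A * (1 + A ^ 2)⁻¹ * H)
        + (Complex.exp (-(θ : ℂ) * Complex.I) *
            (1 + Complex.I • A.map Complex.ofReal).det).re
          * Matrix.trace ((1 + A ^ 2)⁻¹ * H))
      0 ∧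
    ((Complex.exp (-(θ : ℂ) * Complex.I) *
        (1 + Complex.I • A.map Complex.ofReal).det).im = 0 →
      (Complex.exp (-(θ : ℂ) * Complex.I) *
          (1 + Complex.I • A.map Complex.ofReal).det).im
          * Matrix.trace (A * (1 + A ^ 2)⁻¹ * H)
        + (Complex.exp (-(θ : ℂ) * Complex.I) *
            (1 + Complex.I • A.map Complex.ofReal).det).re
          * Matrix.trace ((1 + A ^ 2)⁻¹ * H)
        = (Complex.exp (-(θ : ℂ) * Complex.I) *
            (1 + Complex.I • A.map Complex.ofReal).det).re
          * Matrix.trace ((1 + A ^ 2)⁻¹ * H)) := by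
  constructor
  swap
  · intro h; rw [h]; ring
  set φ : Matrix (Fin n) (Fin n) ℝ →+* Matrix (Fin n) (Fin n) ℂ :=
    Complex.ofRealHom.mapMatrix with hφ
  -- positivity of 1 + A^2
  have h2 : (A ^ 2).PosSemidef := by
    have := Matrix.posSemidef_conjTranspose_mul_self A
    simpa [pow_two, Matrix.conjTranspose, hA.eq, Matrix.IsSymm,
      show A.map (starRingEnd ℝ) = A from by ext i j; simp] using this
  have hP : (1 + A ^ 2).PosDef := Matrix.PosDef.one.add_posSemidef h2
  set B := (1 + A ^ 2)⁻¹ with hB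
  have hPinv : (1 + A ^ 2) * B = 1 :=
    Matrix.mul_nonsing_inv _ ((Matrix.isUnit_iff_isUnit_det _).mp hP.isUnit)
  set M0 : Matrix (Fin n) (Fin n) ℂ := 1 + Complex.I • φ A with hM0
  set N : Matrix (Fin n) (Fin n) ℂ := φ B - Complex.I • φ (A * B) with hN
  have hAB : φ A * φ B = φ (A * B) := (_root_.map_mul φ A B).symm
  have hAAB : φ A * φ (A * B) = 1 - φ B := by
    rw [← _root_.map_mul φ,
      show A * (A * B) = (1 + A ^ 2) * B - B by simp [add_mul, pow_two, mul_assoc],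
      map_sub, hPinv, _root_.map_one φ]
  have hM0N : M0 * N = 1 := by
    rw [hM0, hN, mul_sub, add_mul, add_mul, one_mul, one_mul, Matrix.smul_mul, Matrix.smul_mul,
      Matrix.mul_smul, smul_smul, Complex.I_mul_I, neg_one_smul, hAB, hAAB]
    abel
  set Hc := φ H with hHc
  set C : Matrix (Fin n) (Fin n) ℂ := Complex.I • (N * Hc) with hC
  -- key factorization
  have key : ∀ t : ℝ, 1 + Complex.I • (A + t • H).map Complex.ofReal
      = M0 * (1 + (t : ℂ) • C) := by
    intro t
    have hmap : (A + t • H).map Complex.ofReal = φ A + (t : ℂ) • Hc := by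
      ext i j
      show ((A i j + t • H i j : ℝ) : ℂ) = (A i j : ℂ) + (t : ℂ) • ((H i j : ℝ) : ℂ)
      simp only [smul_eq_mul]
      push_cast
      ring
    rw [hmap, mul_add, mul_one, hC, Matrix.mul_smul, Matrix.mul_smul, ← mul_assoc, hM0N,
      one_mul, hM0, smul_add, smul_smul, smul_smul, mul_comm Complex.I ((t : ℂ))]
    abel
  set z := Complex.exp (-(θ : ℂ) * Complex.I) with hzdef
  set q : ℂ[X] := (Matrix.det (1 + (X : ℂ[X]) • C.map Polynomial.C)).divX.divX with hq
  have hdet : ∀ t : ℝ, (1 + Complex.I • (A + t • H).map Complex.ofReal).det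
      = M0.det * (1 + C.trace * t + q.eval (t : ℂ) * (t : ℂ) ^ 2) := by
    intro t
    rw [key t, Matrix.det_mul, Matrix.det_one_add_smul ((t : ℂ)) C]
  -- derivative of the auxiliary scalar function
  have h1 : HasDerivAt (fun t : ℝ => (t : ℂ)) 1 0 := by
    simpa using (hasDerivAt_id (0:ℝ)).ofReal_comp
  have hqd : HasDerivAt (fun t : ℝ => q.eval (t : ℂ)) (q.derivative.eval 0) 0 := by
    simpa using (q.hasDerivAt ((0:ℝ) : ℂ)).comp_ofReal
  have hsq : HasDerivAt (fun t : ℝ => ((t : ℂ)) ^ 2) 0 0 := by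
    simpa using (hasDerivAt_pow 2 (((0:ℝ) : ℂ))).comp_ofReal
  have hu : HasDerivAt (fun t : ℝ => 1 + C.trace * (t : ℂ) + q.eval (t : ℂ) * (t : ℂ) ^ 2)
      C.trace 0 := by
    have := ((hasDerivAt_const (0:ℝ) (1:ℂ)).add (h1.const_mul C.trace)).add (hqd.mul hsq)
    exact this.congr_deriv (by simp)
  have hg : HasDerivAt (fun t : ℝ => z * (M0.det *
      (1 + C.trace * (t : ℂ) + q.eval (t : ℂ) * (t : ℂ) ^ 2))) (z * (M0.det * C.trace)) 0 :=
    (hu.const_mul M0.det).const_mul z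
  have him : HasDerivAt (fun t : ℝ => (z * (M0.det *
      (1 + C.trace * (t : ℂ) + q.eval (t : ℂ) * (t : ℂ) ^ 2))).im)
      (z * (M0.det * C.trace)).im 0 := by
    have h := (Complex.imCLM.hasFDerivAt.comp (0:ℝ) hg.hasFDerivAt).hasDerivAt
    simpa only [Function.comp_def, ContinuousLinearMap.coe_comp', Function.comp_apply,
      ContinuousLinearMap.smulRight_apply, ContinuousLinearMap.one_apply, one_smul,
      Complex.imCLM_apply, ContinuousLinearMap.toSpanSingleton_apply] using h
  -- trace computation
  have htr : ∀ M : Matrix (Fin n) (Fin n) ℝ, (φ M).trace = ((M.trace : ℝ) : ℂ) := by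
    intro M; simp [hφ, Matrix.trace, Matrix.diag]
  have hCtr : C.trace = (((A * B * H).trace : ℝ) : ℂ) + (((B * H).trace : ℝ) : ℂ) * Complex.I := by
    rw [hC, Matrix.trace_smul, hN, Matrix.sub_mul, Matrix.smul_mul, Matrix.trace_sub,
      Matrix.trace_smul, hHc, ← _root_.map_mul φ B H, ← _root_.map_mul φ (A * B) H, htr, htr]
    simp only [smul_eq_mul]
    linear_combination (-((((A * B) * H).trace : ℝ) : ℂ)) * Complex.I_sq
  -- finish
  have him2 : HasDerivAt (fun t : ℝ =>
      (z * (1 + Complex.I • (A + t • H).map Complex.ofReal).det).im)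
      (z * (M0.det * C.trace)).im 0 := by
    refine him.congr_of_eventuallyEq (Filter.Eventually.of_forall fun t => ?_)
    simp only [hdet t]
  have hM0A : (1 + Complex.I • A.map Complex.ofReal) = M0 := rfl
  convert him2 using 1
  rw [hM0A, hCtr, ← mul_assoc]
  simp only [Complex.mul_im, Complex.add_im, Complex.add_re, Complex.mul_re,
    Complex.ofReal_re, Complex.ofReal_im, Complex.I_re, Complex.I_im]
  ring
end

section
/- Let n ≥ 1, let A = diag(λ₁,…,λₙ) be a real diagonal n×n matrix, and let H be a real symmetric n×n matrix. Then 2·Tr(H(I + A²)^{−1}H) − 2·Tr(A(I + A²)^{−1}(AH + HA)(I + A²)^{−1}H) = ∑_{p=1}^n ∑_{q=1}^n (2 − 2λ_p λ_q)/((1 + λ_p²)(1 + λ_q²)) · H_{pq}². -/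
/-! Since `A` is diagonal, so is `(I + A²)⁻¹`, and both traces expand into traces of the form
`Tr (D₁ H D₂ H) = ∑ p q, (D₁)ₚ (D₂)_q H_pq H_qp` with `D₁, D₂` diagonal; symmetry of `H` makes
each summand a multiple of `H_pq²`. -/

open Matrix

namespace Matrix

variable {n R : Type*} [Fintype n] [DecidableEq n]

theorem inv_diagonal_of_ne_zero [Field R] {v : n → R} (hv : ∀ i, v i ≠ 0) :
    (diagonal v)⁻¹ = diagonal v⁻¹ :=
  inv_eq_left_inv <| by
    rw [diagonal_mul_diagonal, ← diagonal_one]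
    exact congrArg diagonal (funext fun i => inv_mul_cancel₀ (hv i))

theorem inv_one_add_diagonal_sq [Field R] [LinearOrder R] [IsStrictOrderedRing R] (d : n → R) :
    (1 + diagonal d ^ 2)⁻¹ = diagonal (1 + d ^ 2)⁻¹ := by
  rw [diagonal_pow, ← diagonal_one, diagonal_add]
  exact inv_diagonal_of_ne_zero fun i => by simp only [Pi.pow_apply]; positivity

theorem trace_diagonal_mul_mul_diagonal_mul [CommSemiring R] (a b : n → R) (M N : Matrix n n R) :
    trace (diagonal a * M * diagonal b * N) = ∑ p, ∑ q, a p * M p q * b q * N q p :=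
  Finset.sum_congr rfl fun p _ => by
    simp only [diag_apply, mul_apply (M := diagonal a * M * diagonal b), mul_diagonal, diagonal_mul]

end Matrix

theorem stmt_14_general (n : ℕ) (lam : Fin n → ℝ)
    (H : Matrix (Fin n) (Fin n) ℝ) (hH : H.IsSymm) :
    2 * Matrix.trace (H * (1 + (Matrix.diagonal lam) ^ 2)⁻¹ * H)
      - 2 * Matrix.trace ((Matrix.diagonal lam) * (1 + (Matrix.diagonal lam) ^ 2)⁻¹ *
          ((Matrix.diagonal lam) * H + H * (Matrix.diagonal lam)) *
          (1 + (Matrix.diagonal lam) ^ 2)⁻¹ * H)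
      = ∑ p, ∑ q,
          (2 - 2 * lam p * lam q) / ((1 + (lam p) ^ 2) * (1 + (lam q) ^ 2)) * (H p q) ^ 2 := by
  set d : Fin n → ℝ := (1 + lam ^ 2)⁻¹
  have hsplit : diagonal lam * diagonal d * (diagonal lam * H + H * diagonal lam) * diagonal d * H
      = diagonal (lam * d * lam) * H * diagonal d * H
        + diagonal (lam * d) * H * diagonal (lam * d) * H := by
    simp only [mul_add, add_mul, Pi.mul_def, ← diagonal_mul_diagonal, Matrix.mul_assoc]
  rw [inv_one_add_diagonal_sq, hsplit, trace_add]
  nth_rw 1 [← one_mul H]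
  rw [← diagonal_one]
  simp only [trace_diagonal_mul_mul_diagonal_mul, Finset.mul_sum, ← Finset.sum_add_distrib,
    ← Finset.sum_sub_distrib]
  refine Finset.sum_congr rfl fun p _ => Finset.sum_congr rfl fun q _ => ?_
  rw [← hH.apply p q]
  simp only [d, Pi.inv_apply, Pi.add_apply, Pi.one_apply, Pi.pow_apply, Pi.mul_apply, one_mul]
  field_simp
  ring

/-- Let `A = diag (λ₁, …, λₙ)` be a real diagonal `n×n` matrix and `H` a
real symmetric `n×n` matrix. Then
`2 Tr (H (I + A²)⁻¹ H) - 2 Tr (A (I + A²)⁻¹ (AH + HA) (I + A²)⁻¹ H)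
  = ∑ p, ∑ q, (2 - 2 λ_p λ_q) / ((1 + λ_p²)(1 + λ_q²)) · H_{pq}²`. -/
theorem stmt_14 (n : ℕ) (hn : 1 ≤ n) (lam : Fin n → ℝ)
    (H : Matrix (Fin n) (Fin n) ℝ) (hH : H.IsSymm) :
    2 * Matrix.trace (H * (1 + (Matrix.diagonal lam) ^ 2)⁻¹ * H)
      - 2 * Matrix.trace ((Matrix.diagonal lam) * (1 + (Matrix.diagonal lam) ^ 2)⁻¹ *
          ((Matrix.diagonal lam) * H + H * (Matrix.diagonal lam)) *
          (1 + (Matrix.diagonal lam) ^ 2)⁻¹ * H)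
      = ∑ p, ∑ q,
          (2 - 2 * lam p * lam q) / ((1 + (lam p) ^ 2) * (1 + (lam q) ^ 2)) * (H p q) ^ 2 :=
  stmt_14_general n lam H hH
end
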